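/- arXiv:1103.6233 — 6 statements merged into one kernel-verified Lean document; each statement's English description precedes it below -/
import Mathlib

section
/- The Zariski–Riemann space ZR(K/k), endowed with the topology generated by the sets U(S) = {R ∈ ZR(K/k) : S ⊆ R} for S ranging over all finite subsets of K, is quasi-compact: every open cover of ZR(K/k) by such opens (equivalently, every open cover) admits a finite subcover. -/
open Filter Topology

/-- The Zariski–Riemann space of `K` over `k`: all valuation subrings of `K`
containing (the image of) `k`. -/
def ZR (k K : Type*) [Field k] [Field K] [Algebra k K] : Type _ :=
  {R : ValuationSubring K // ∀ x : k, algebraMap k K x ∈ R}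

/-- The topology on `ZR k K` generated by the sets `U(S) = {R | S ⊆ R}`,
for `S` ranging over the finite subsets of `K`. -/
instance ZR.instTopologicalSpace (k K : Type*) [Field k] [Field K] [Algebra k K] :
    TopologicalSpace (ZR k K) :=
  TopologicalSpace.generateFrom
    {U : Set (ZR k K) | ∃ S : Finset K, U = {R : ZR k K | ∀ f ∈ S, f ∈ R.1}}

/-! Every ultrafilter `F` on the Zariski–Riemann space converges. Its limit is the set of those
`x ∈ K` that lie in `F`-almost every `R`: this is a valuation subring because for each `x` every
`R` contains `x` or `x⁻¹`, and an ultrafilter contains one of the two corresponding sets. The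
filter converges to this point since a basic open set `U(S)` is the finite intersection of the
sets `U({x})`, `x ∈ S`. -/

namespace ValuationSubring

variable {K : Type*} [Field K]

def ultrafilterLimit (F : Ultrafilter (ValuationSubring K)) : ValuationSubring K where
  carrier := {x | ∀ᶠ R in (F : Filter (ValuationSubring K)), x ∈ R}
  zero_mem' := .of_forall fun R => R.zero_mem
  one_mem' := .of_forall fun R => R.one_mem
  add_mem' ha hb := (ha.and hb).mono fun R h => R.add_mem _ _ h.1 h.2
  mul_mem' ha hb := (ha.and hb).mono fun R h => R.mul_mem _ _ h.1 h.2
  neg_mem' ha := ha.mono fun R h => R.neg_mem _ h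
  mem_or_inv_mem' x := F.eventually_or.1 <| .of_forall fun R => R.mem_or_inv_mem x

theorem mem_ultrafilterLimit {F : Ultrafilter (ValuationSubring K)} {x : K} :
    x ∈ ultrafilterLimit F ↔ ∀ᶠ R in (F : Filter (ValuationSubring K)), x ∈ R :=
  Iff.rfl

end ValuationSubring

namespace ZR

variable {k K : Type*} [Field k] [Field K] [Algebra k K]

def ultrafilterLimit (F : Ultrafilter (ZR k K)) : ZR k K :=
  ⟨ValuationSubring.ultrafilterLimit (F.map Subtype.val), fun x =>
    ValuationSubring.mem_ultrafilterLimit.2 <| eventually_map.2 <| .of_forall fun R => R.2 x⟩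

theorem le_nhds_ultrafilterLimit (F : Ultrafilter (ZR k K)) :
    (F : Filter (ZR k K)) ≤ 𝓝 (ultrafilterLimit F) := by
  rw [TopologicalSpace.nhds_generateFrom]
  refine le_iInf₂ ?_
  rintro _ ⟨hFU, S, rfl⟩
  exact le_principal_iff.2 <| (eventually_all_finset S).2 fun x hx =>
    ValuationSubring.mem_ultrafilterLimit.1 (hFU x hx)

end ZR

theorem ZR.compactSpace_general (k K : Type*) [Field k] [Field K] [Algebra k K] :
    CompactSpace (ZR k K) :=
  ⟨isCompact_iff_ultrafilter_le_nhds.2 fun F _ =>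
    ⟨_, Set.mem_univ _, ZR.le_nhds_ultrafilterLimit F⟩⟩

/-- Zariski's theorem: the Zariski–Riemann space of a finitely generated field
extension `K/k` is quasi-compact. -/
theorem ZR.compactSpace (k K : Type*) [Field k] [Field K] [Algebra k K]
    (s : Finset K) (hs : IntermediateField.adjoin k (s : Set K) = ⊤) :
    CompactSpace (ZR k K) :=
  ZR.compactSpace_general k K
end

section
/- For any two points μ, ν of the Zariski–Riemann space ZR(K/k), the point ν lies in the topological closure of the singleton {μ} if and only if the valuation subring of ν is contained in the valuation subring of μ (as subsets of K). -/
open Filter Topology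

theorem TopologicalSpace.specializes_generateFrom_iff {α : Type*} {g : Set (Set α)} {x y : α} :
    @Specializes α (generateFrom g) x y ↔ ∀ s ∈ g, y ∈ s → x ∈ s := by
  let := generateFrom g
  rw [Specializes, ← tendsto_id', tendsto_nhds_generateFrom_iff]
  refine forall₂_congr fun s hs => imp_congr_right fun _ => ?_
  exact (isOpen_generateFrom_of_mem hs).mem_nhds_iff

theorem ZR.specializes_iff {k K : Type*} [Field k] [Field K] [Algebra k K] {μ ν : ZR k K} :
    μ ⤳ ν ↔ (ν.1 : Set K) ⊆ (μ.1 : Set K) := by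
  rw [TopologicalSpace.specializes_generateFrom_iff]
  constructor
  · intro h x hx
    simpa using h _ ⟨{x}, rfl⟩ (by simpa using hx)
  · rintro hsub _ ⟨S, rfl⟩ hν f hf
    exact hsub (hν f hf)

theorem ZR.mem_closure_singleton_iff_general (k K : Type*) [Field k] [Field K] [Algebra k K]
    (μ ν : ZR k K) :
    ν ∈ closure ({μ} : Set (ZR k K)) ↔ (ν.1 : Set K) ⊆ (μ.1 : Set K) := by
  rw [← specializes_iff_mem_closure, ZR.specializes_iff]

/-- `ν` lies in the closure of `{μ}` in the Zariski–Riemann space iff the valuation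
subring of `ν` is contained in that of `μ`. -/
theorem ZR.mem_closure_singleton_iff (k K : Type*) [Field k] [Field K] [Algebra k K]
    (s : Finset K) (hs : IntermediateField.adjoin k (s : Set K) = ⊤)
    (μ ν : ZR k K) :
    ν ∈ closure ({μ} : Set (ZR k K)) ↔ (ν.1 : Set K) ⊆ (μ.1 : Set K) :=
  ZR.mem_closure_singleton_iff_general k K μ ν
end

section
/- The normalized generic fiber ]X[_{A,f} is sequentially compact: every sequence of points of ]X[_{A,f} admits a subsequence converging to a point of ]X[_{A,f}. -/
open Filter Topology

/-- The normalized generic fiber `]X[_{A,f}` of the formal completion of `X = Spec A`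
along `D = {f = 0}`: bounded multiplicative semi-norms `φ` on `A` with `φ f = e⁻¹`,
topologized by pointwise convergence (as a subset of `A → ℝ` with the product topology). -/
def NGF (A : Type*) [CommRing A] (f : A) : Set (A → ℝ) :=
  {φ | φ 0 = 0 ∧ φ 1 = 1 ∧ (∀ a b, φ (a * b) = φ a * φ b) ∧
    (∀ a b, φ (a + b) ≤ max (φ a) (φ b)) ∧ (∀ a, 0 ≤ φ a ∧ φ a ≤ 1) ∧
    φ f = Real.exp (-1)}

/-! On a finite-dimensional subspace `V ⊆ A` a point of `NGF A f` is an ultrametric seminorm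
invariant under `kˣ`, so vectors with distinct positive values are linearly independent and it
takes at most `dim V + 1` values on `V`; in particular it attains its maximum. This drives an
induction on `dim V` showing that such seminorms on `V` with values in `[0, 1]` form a
sequentially compact set. As `A` is the union of the finite-dimensional subspaces
`span(1, generators) ^ m`, a diagonal argument yields a subsequence converging pointwise on all
of `A`, and the limit lies in `NGF A f` because `NGF A f` is closed in `A → ℝ`. -/

open Set

/-- A nonarchimedean seminorm on a `k`-vector space, for the trivial absolute value on `k`. -/
structure IsUltraSeminorm (k : Type*) {M : Type*} [Field k] [AddCommGroup M] [Module k M]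
    (ψ : M → ℝ) : Prop where
  map_zero : ψ 0 = 0
  isNonarchimedean : IsNonarchimedean ψ
  map_smul : ∀ c : k, c ≠ 0 → ∀ v, ψ (c • v) = ψ v

namespace IsUltraSeminorm

variable {k M N : Type*} [Field k] [AddCommGroup M] [Module k M] [AddCommGroup N] [Module k N]
  {ψ : M → ℝ}

lemma map_neg (hψ : IsUltraSeminorm k ψ) (v : M) : ψ (-v) = ψ v := by
  simpa using hψ.map_smul (-1) (by norm_num) v

lemma nonneg (hψ : IsUltraSeminorm k ψ) (v : M) : 0 ≤ ψ v := by
  have := hψ.isNonarchimedean v (-v)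
  rwa [add_neg_cancel, hψ.map_zero, hψ.map_neg, max_self] at this

lemma comp (hψ : IsUltraSeminorm k ψ) (L : N →ₗ[k] M) : IsUltraSeminorm k (ψ ∘ L) where
  map_zero := by simp [hψ.map_zero]
  isNonarchimedean v w := by simpa using hψ.isNonarchimedean (L v) (L w)
  map_smul c hc v := by simpa using hψ.map_smul c hc (L v)

lemma isClosed_setOf : IsClosed {ψ : M → ℝ | IsUltraSeminorm k ψ} := by
  have : {ψ : M → ℝ | IsUltraSeminorm k ψ} = {ψ | ψ 0 = 0} ∩
      (⋂ v, ⋂ w, {ψ | ψ (v + w) ≤ max (ψ v) (ψ w)}) ∩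
      ⋂ c : k, ⋂ (_ : c ≠ 0), ⋂ v, {ψ | ψ (c • v) = ψ v} := by
    ext ψ
    simp only [mem_ofPred_eq, mem_inter_iff, mem_iInter]
    exact ⟨fun h => ⟨⟨h.1, h.2⟩, h.3⟩, fun h => ⟨h.1.1, h.1.2, h.2⟩⟩
  rw [this]
  refine .inter (.inter ?_ ?_) ?_
  · exact isClosed_eq (continuous_apply 0) continuous_const
  · exact isClosed_iInter fun v => isClosed_iInter fun w =>
      isClosed_le (continuous_apply _) ((continuous_apply v).max (continuous_apply w))
  · exact isClosed_iInter fun c => isClosed_iInter fun _ => isClosed_iInter fun v =>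
      isClosed_eq (continuous_apply _) (continuous_apply v)

lemma linearIndependent (hψ : IsUltraSeminorm k ψ) {ι : Type*} {v : ι → M}
    (hpos : ∀ i, 0 < ψ (v i)) (hinj : Function.Injective (ψ ∘ v)) : LinearIndependent k v := by
  classical
  rw [linearIndependent_iff]
  intro l hl
  by_contra hl0
  obtain ⟨i, hi, hmax⟩ := l.support.exists_max_image (fun i => ψ (v i))
    (Finsupp.support_nonempty_iff.2 hl0)
  have hsum : ψ (∑ j ∈ l.support, l j • v j) = ψ (l i • v i) :=
    hψ.isNonarchimedean.apply_sum_eq_of_lt (fun a => (hψ.map_neg a).symm) hi fun j hj hji => by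
      rw [hψ.map_smul _ (Finsupp.mem_support_iff.1 hj),
        hψ.map_smul _ (Finsupp.mem_support_iff.1 hi)]
      exact (hmax j hj).lt_of_ne (hinj.ne hji)
  rw [Finsupp.linearCombination_apply, Finsupp.sum] at hl
  rw [hl, hψ.map_zero, hψ.map_smul _ (Finsupp.mem_support_iff.1 hi)] at hsum
  exact (hpos i).ne hsum

lemma finite_range [FiniteDimensional k M] (hψ : IsUltraSeminorm k ψ) : (range ψ).Finite := by
  by_contra hinf
  let e : ℕ ↪ ↥(range ψ \ {0}) :=
    (Set.Infinite.sdiff hinf (finite_singleton 0)).natEmbedding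
  choose v hv using fun n => (e n).2.1
  refine Module.Finite.not_linearIndependent_of_infinite (R := k) v
    (hψ.linearIndependent (fun n => ?_) fun n m h => e.injective (Subtype.ext ?_))
  · rw [hv]
    exact (hψ.nonneg _ |>.trans_eq (hv n)).lt_of_ne' (e n).2.2
  · simpa [hv] using h

lemma exists_forall_le [FiniteDimensional k M] (hψ : IsUltraSeminorm k ψ) :
    ∃ u, ∀ v, ψ v ≤ ψ u := by
  obtain ⟨u, hu⟩ := (range_nonempty ψ).csSup_mem hψ.finite_range
  exact ⟨u, fun v => hu ▸ le_csSup hψ.finite_range.bddAbove (mem_range_self v)⟩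

def ball (hψ : IsUltraSeminorm k ψ) {c : ℝ} (hc : 0 < c) : Submodule k M where
  carrier := {v | ψ v < c}
  add_mem' hv hw := (hψ.isNonarchimedean _ _).trans_lt (max_lt hv hw)
  zero_mem' := by simpa [hψ.map_zero]
  smul_mem' a v hv := by
    rcases eq_or_ne a 0 with rfl | ha
    · simpa [hψ.map_zero]
    · simpa [hψ.map_smul a ha] using hv

end IsUltraSeminorm

namespace Submodule

variable {R M : Type*} [Semiring R] [AddCommMonoid M] [Module R M]

def seqLiminf (W : ℕ → Submodule R M) : Submodule R M where
  carrier := {v | ∀ᶠ j in atTop, v ∈ W j}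
  add_mem' hv hw := (hv.and hw).mono fun _ h => add_mem h.1 h.2
  zero_mem' := .of_forall fun _ => zero_mem _
  smul_mem' c _ hv := hv.mono fun _ h => smul_mem _ c h

lemma seqLiminf_le_seqLiminf_comp (W : ℕ → Submodule R M) {h : ℕ → ℕ}
    (hh : Tendsto h atTop atTop) : seqLiminf W ≤ seqLiminf (W ∘ h) :=
  fun _ hv => hh.eventually hv

lemma eventually_seqLiminf_le [IsNoetherian R M] (W : ℕ → Submodule R M) :
    ∀ᶠ j in atTop, seqLiminf W ≤ W j := by
  obtain ⟨s, hs⟩ := IsNoetherian.noetherian (seqLiminf W)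
  filter_upwards [(s.eventually_all).2 fun v hv => (hs ▸ subset_span hv : v ∈ seqLiminf W)]
    with j hj
  rw [← hs, span_le]
  exact hj

-- Noetherianity provides a subsequence maximizing `seqLiminf`; any further extraction along
-- which `v` always lies in the `W`s can then not enlarge it.
lemma exists_strictMono_frequently_mem_imp_mem_seqLiminf [IsNoetherian R M]
    (W : ℕ → Submodule R M) : ∃ g : ℕ → ℕ, StrictMono g ∧
      ∀ v, (∃ᶠ j in atTop, v ∈ W (g j)) → v ∈ seqLiminf (W ∘ g) := by
  obtain ⟨_, ⟨g, rfl⟩, hmax⟩ := set_has_maximal_iff_noetherian.2 ‹_›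
    (range fun g : {g : ℕ → ℕ // StrictMono g} => seqLiminf (W ∘ g.1))
    ⟨_, ⟨id, strictMono_id⟩, rfl⟩
  refine ⟨g.1, g.2, fun v hv => ?_⟩
  obtain ⟨h, hh, hvh⟩ := extraction_of_frequently_atTop hv
  have hle := seqLiminf_le_seqLiminf_comp (W ∘ g.1) hh.tendsto_atTop
  rw [hle.eq_of_not_lt (hmax _ ⟨⟨g.1 ∘ h, g.2.comp hh⟩, rfl⟩)]
  exact .of_forall hvh

end Submodule

namespace IsUltraSeminorm

variable {k M : Type*} [Field k] [AddCommGroup M] [Module k M]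

-- Induction on the dimension. Pass to a subsequence along which the maxima `ψ n (u n)` converge
-- to some `m > 0`. Vectors outside the strict sublevel sets (whose radius, the maximum, is raised
-- to `m / 2` to keep it positive) eventually take the maximal value; along a further subsequence
-- the vectors inside them eventually form a proper subspace `E`, to which the induction
-- hypothesis applies.
theorem exists_tendsto_subseq [FiniteDimensional k M] {ψ : ℕ → M → ℝ}
    (hψ : ∀ n, IsUltraSeminorm k (ψ n)) {C : ℝ} (hC : ∀ n v, ψ n v ≤ C) :
    ∃ φ : M → ℝ, ∃ g : ℕ → ℕ, StrictMono g ∧ Tendsto (ψ ∘ g) atTop (𝓝 φ) := by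
  induction hd : Module.finrank k M using Nat.strong_induction_on generalizing M with
  | _ d ih =>
  classical
  choose u hu using fun n => (hψ n).exists_forall_le
  obtain ⟨m, hm, g₀, hg₀, hmax⟩ := isCompact_Icc.tendsto_subseq (x := fun n => ψ n (u n))
    fun n => ⟨(hψ n).nonneg _, hC n _⟩
  rcases hm.1.eq_or_lt with rfl | hm0
  · exact ⟨0, g₀, hg₀, tendsto_pi_nhds.2 fun v =>
      squeeze_zero (fun j => (hψ _).nonneg v) (fun j => hu _ v) hmax⟩
  have hc : ∀ j, 0 < max (ψ (g₀ j) (u (g₀ j))) (m / 2) := fun j => by positivity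
  let W j := (hψ (g₀ j)).ball (hc j)
  obtain ⟨g₁, hg₁, hW⟩ := Submodule.exists_strictMono_frequently_mem_imp_mem_seqLiminf W
  set E := Submodule.seqLiminf (W ∘ g₁)
  have hE : E ≠ ⊤ := fun htop => by
    have hlarge := hg₁.tendsto_atTop.eventually (hmax.eventually (eventually_gt_nhds
      (half_lt_self hm0)))
    obtain ⟨j, hEj, hj⟩ := ((Submodule.eventually_seqLiminf_le (W ∘ g₁)).and hlarge).exists
    have hu_mem : u (g₀ (g₁ j)) ∈ W (g₁ j) := hEj (Submodule.eq_top_iff'.1 htop _)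
    exact (hu_mem.trans_eq (max_eq_left hj.le)).false
  obtain ⟨φE, g₂, hg₂, hφE⟩ := ih _ (hd ▸ Submodule.finrank_lt hE)
    (ψ := fun n => ψ (g₀ (g₁ n)) ∘ E.subtype) (fun n => (hψ _).comp _) (fun n v => hC _ _) rfl
  refine ⟨fun v => if h : v ∈ E then φE ⟨v, h⟩ else m, g₀ ∘ g₁ ∘ g₂, hg₀.comp (hg₁.comp hg₂),
    tendsto_pi_nhds.2 fun v => ?_⟩
  by_cases hv : v ∈ E
  · simpa [hv] using tendsto_pi_nhds.1 hφE ⟨v, hv⟩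
  have hout : ∀ᶠ j in atTop, v ∉ W (g₁ j) := not_frequently.1 (mt (hW v) hv)
  simp only [hv, dite_false]
  refine (hmax.comp (hg₁.comp hg₂).tendsto_atTop).congr' ?_
  filter_upwards [hg₂.tendsto_atTop.eventually hout] with j hj
  exact le_antisymm ((le_max_left _ _).trans (not_lt.1 hj)) (hu _ v)

theorem isSeqCompact_setOf [FiniteDimensional k M] (C : ℝ) :
    IsSeqCompact {ψ : M → ℝ | IsUltraSeminorm k ψ ∧ ∀ v, ψ v ≤ C} := by
  intro ψ hψ
  obtain ⟨φ, g, hg, hφ⟩ := exists_tendsto_subseq (fun n => (hψ n).1) (fun n => (hψ n).2)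
  have hclosed : IsClosed {ψ : M → ℝ | IsUltraSeminorm k ψ ∧ ∀ v, ψ v ≤ C} := by
    rw [ofPred_and, ofPred_forall]
    exact isClosed_setOf.inter
      (isClosed_iInter fun v => isClosed_le (continuous_apply v) continuous_const)
  exact ⟨φ, hclosed.mem_of_tendsto hφ (.of_forall fun n => hψ (g n)), g, hg, hφ⟩

end IsUltraSeminorm

-- Diagonal argument: `G (m + 1)` refines `G m` so that the `m`-th coordinate converges, and the
-- diagonal `j ↦ G j j` is eventually a subsequence of every `G m`.
theorem isSeqCompact_univ_pi {Y : ℕ → Type*} [∀ m, TopologicalSpace (Y m)]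
    {K : ∀ m, Set (Y m)} (hK : ∀ m, IsSeqCompact (K m)) : IsSeqCompact (univ.pi K) := by
  intro u hu
  have hext : ∀ m (g : ℕ → ℕ), ∃ h : ℕ → ℕ, StrictMono h ∧
      ∃ y ∈ K m, Tendsto (fun j => u (g (h j)) m) atTop (𝓝 y) := fun m g => by
    obtain ⟨y, hy, h, hh, hlim⟩ := hK m fun j => hu (g j) m (mem_univ m)
    exact ⟨h, hh, y, hy, hlim⟩
  choose ext hext y hy hlim using hext
  let G : ℕ → ℕ → ℕ := fun m => Nat.rec id (fun m g => g ∘ ext m g) m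
  have hG : ∀ m, StrictMono (G m) := fun m => by
    induction m with
    | zero => exact strictMono_id
    | succ m ih => exact ih.comp (hext m (G m))
  have hG_refines : ∀ m n, m ≤ n → ∀ j, ∃ i ≥ j, G n j = G m i := fun m n hmn => by
    induction n, hmn using Nat.le_induction with
    | base => exact fun j => ⟨j, le_rfl, rfl⟩
    | succ n _ ih =>
      intro j
      obtain ⟨i, hi, hGi⟩ := ih (ext n (G n) j)
      exact ⟨i, (hext n (G n)).le_apply.trans hi, hGi⟩
  refine ⟨fun m => y m (G m), fun m _ => hy m (G m), fun j => G j j,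
    strictMono_nat_of_lt_succ fun j => hG j ((lt_add_one j).trans_le (hext j (G j)).le_apply),
    tendsto_pi_nhds.2 fun m => tendsto_atTop'.2 fun s hs => ?_⟩
  obtain ⟨N, hN⟩ := eventually_atTop.1 (hlim m (G m) hs)
  refine ⟨max N (m + 1), fun j hj => ?_⟩
  obtain ⟨i, hij, hGi⟩ := hG_refines (m + 1) j (le_of_max_le_right hj) j
  rw [Function.comp_apply, hGi]
  exact hN i ((le_of_max_le_left hj).trans hij)

theorem Algebra.FiniteType.exists_finiteDimensional_cover (k A : Type*) [Field k] [CommRing A]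
    [Algebra k A] [Algebra.FiniteType k A] :
    ∃ V : ℕ → Submodule k A, (∀ m, FiniteDimensional k (V m)) ∧ ∀ a, ∃ m, a ∈ V m := by
  obtain ⟨s, hs⟩ := Algebra.FiniteType.out (R := k) (A := A)
  set P := Submodule.span k (insert 1 (s : Set A))
  have h1 : (1 : A) ∈ P := Submodule.subset_span (mem_insert 1 _)
  have hmono : Monotone (P ^ ·) := fun _ _ => pow_le_pow_right' (Submodule.one_le.2 h1)
  refine ⟨(P ^ ·), fun m => Module.Finite.iff_fg.2
    ((Submodule.fg_span (s.finite_toSet.insert 1)).pow m), fun a => ?_⟩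
  have ha : a ∈ Algebra.adjoin k (s : Set A) := hs ▸ Algebra.mem_top
  induction ha using Algebra.adjoin_induction with
  | mem x hx => exact ⟨1, by simpa using Submodule.subset_span (mem_insert_of_mem 1 hx)⟩
  | algebraMap r => exact ⟨0, by simp⟩
  | add x y _ _ hx hy =>
    obtain ⟨m, hm⟩ := hx
    obtain ⟨l, hl⟩ := hy
    exact ⟨max m l, add_mem (hmono (le_max_left m l) hm) (hmono (le_max_right m l) hl)⟩
  | mul x y _ _ hx hy =>
    obtain ⟨m, hm⟩ := hx
    obtain ⟨l, hl⟩ := hy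
    exact ⟨m + l, by simpa only [pow_add] using Submodule.mul_mem_mul hm hl⟩

namespace NGF

theorem isClosed (A : Type*) [CommRing A] (f : A) : IsClosed (NGF A f) := by
  simp only [NGF, ofPred_and, ofPred_forall]
  refine .inter ?_ (.inter ?_ (.inter ?_ (.inter ?_ (.inter ?_ ?_))))
  · exact isClosed_eq (continuous_apply 0) continuous_const
  · exact isClosed_eq (continuous_apply 1) continuous_const
  · exact isClosed_iInter fun a => isClosed_iInter fun b =>
      isClosed_eq (continuous_apply _) ((continuous_apply a).mul (continuous_apply b))
  · exact isClosed_iInter fun a => isClosed_iInter fun b =>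
      isClosed_le (continuous_apply _) ((continuous_apply a).max (continuous_apply b))
  · exact isClosed_iInter fun a => (isClosed_le continuous_const (continuous_apply a)).inter
      (isClosed_le (continuous_apply a) continuous_const)
  · exact isClosed_eq (continuous_apply f) continuous_const

variable {A : Type*} [CommRing A] {f : A} {φ : A → ℝ}

lemma apply_of_isUnit (hφ : φ ∈ NGF A f) {a : A} (ha : IsUnit a) : φ a = 1 := by
  obtain ⟨b, hab⟩ := ha.exists_right_inv
  have h := hφ.2.2.1 a b
  rw [hab, hφ.2.1] at h
  nlinarith [hφ.2.2.2.2.1 a, hφ.2.2.2.2.1 b]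

lemma isUltraSeminorm (k : Type*) [Field k] [Algebra k A] (hφ : φ ∈ NGF A f) :
    IsUltraSeminorm k φ where
  map_zero := hφ.1
  isNonarchimedean := hφ.2.2.2.1
  map_smul c hc a := by
    rw [Algebra.smul_def, hφ.2.2.1, apply_of_isUnit hφ ((IsUnit.mk0 c hc).map _), one_mul]

end NGF

theorem NGF.isSeqCompact_general (k A : Type*) [Field k] [CommRing A]
    [Algebra k A] [Algebra.FiniteType k A] (f : A) :
    IsSeqCompact (NGF A f) := by
  obtain ⟨V, hVfd, hV⟩ := Algebra.FiniteType.exists_finiteDimensional_cover k A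
  choose idx hidx using hV
  intro x hx
  have hK := isSeqCompact_univ_pi fun m =>
    IsUltraSeminorm.isSeqCompact_setOf (k := k) (M := V m) 1
  obtain ⟨y, -, g, hg, hy⟩ := hK (x := fun n m v => x n v) fun n m _ =>
    ⟨(NGF.isUltraSeminorm k (hx n)).comp (V m).subtype, fun v => ((hx n).2.2.2.2.1 v).2⟩
  have hlim : Tendsto (x ∘ g) atTop (𝓝 fun a => y (idx a) ⟨a, hidx a⟩) :=
    tendsto_pi_nhds.2 fun a => tendsto_pi_nhds.1 (tendsto_pi_nhds.1 hy (idx a)) ⟨a, hidx a⟩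
  exact ⟨_, (NGF.isClosed A f).mem_of_tendsto hlim (.of_forall fun n => hx (g n)), g, hg, hlim⟩

/-- The normalized generic fiber is sequentially compact: every sequence in it has a
subsequence converging to a point of it. -/
theorem NGF.isSeqCompact (k A : Type*) [Field k] [CommRing A] [IsDomain A]
    [Algebra k A] [Algebra.FiniteType k A] [IsIntegrallyClosed A] (f : A) (hf : f ≠ 0) :
    IsSeqCompact (NGF A f) :=
  NGF.isSeqCompact_general k A f
end

section
/- The Berkovich closed unit ball B_n(k) is sequentially compact: every sequence of points of B_n(k) admits a subsequence converging (pointwise on the polynomial ring) to a point of B_n(k). -/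
/-!
The ball is compact, being closed in `[0,1] ^ k[x₀, …, x_n]`, but such a product is not
sequentially compact, so a finer argument is needed. Take a cluster point `w` of the sequence
that is minimal for the pointwise order (Zorn's lemma, using that the set of cluster points is
compact). By Noetherianity every set `{w < q}`, `q ∈ ℚ`, lies in the ideal generated by finitely
many of its elements; pass to a subsequence converging at these countably many generators. The
ultrametric inequality and `φ ≤ 1` then give `limsup φᵢ(P) ≤ w(P)` for every `P`, so every
cluster point of the subsequence lies below `w`, hence equals `w` by minimality. A sequence in a
compact set with a unique cluster point converges to it.
-/

open Filter Topology

/-- The Berkovich closed unit ball `B_n(k)`: multiplicative semi-norms `φ` on the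
polynomial ring `k[x₀, …, x_n]` that are trivial on `k`, with `φ x₀ = e⁻¹` and
`φ x_i ≤ 1` for `i ≥ 1`, topologized by pointwise convergence (as a subset of the
product space). -/
def BerkovichBall (k : Type*) [Field k] (n : ℕ) :
    Set (MvPolynomial (Fin (n + 1)) k → ℝ) :=
  {φ | φ 0 = 0 ∧ φ 1 = 1 ∧ (∀ P Q, φ (P * Q) = φ P * φ Q) ∧
    (∀ P Q, φ (P + Q) ≤ max (φ P) (φ Q)) ∧ (∀ P, 0 ≤ φ P) ∧
    (∀ c : k, c ≠ 0 → φ (MvPolynomial.C c) = 1) ∧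
    φ (MvPolynomial.X 0) = Real.exp (-1) ∧
    ∀ i : Fin (n + 1), i ≠ 0 → φ (MvPolynomial.X i) ≤ 1}

/-- The conditions making every sublevel set `{P | v P < b}`, `b > 0`, an ideal. -/
structure IsIdealGauge {R : Type*} [Semiring R] (v : R → ℝ) : Prop where
  map_zero : v 0 = 0
  isNonarchimedean : IsNonarchimedean v
  mul_le : ∀ a P, v (a * P) ≤ v P

namespace IsIdealGauge

variable {R : Type*} [Semiring R] {v : R → ℝ}

lemma nonneg (hv : IsIdealGauge v) (P : R) : 0 ≤ v P := by
  simpa [hv.map_zero] using hv.mul_le 0 P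

lemma lt_of_mem_span (hv : IsIdealGauge v) {t : Set R} {b : ℝ} (hb : 0 < b)
    (ht : ∀ g ∈ t, v g < b) {P : R} (hP : P ∈ Ideal.span t) : v P < b := by
  induction hP using Submodule.span_induction with
  | mem g hg => exact ht g hg
  | zero => rwa [hv.map_zero]
  | add P Q _ _ hP hQ => exact (hv.isNonarchimedean P Q).trans_lt (sup_lt_iff.2 ⟨hP, hQ⟩)
  | smul a P _ hP => exact (hv.mul_le a P).trans_lt hP

end IsIdealGauge

section Topology

variable {X : Type*} [TopologicalSpace X] [Preorder X] [ClosedIicTopology X] {C : Set X}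

theorem IsCompact.exists_lowerBound_of_isChain (hC : IsCompact C) {c : Set X} (hcC : c ⊆ C)
    (hc : IsChain (· ≤ ·) c) (hne : c.Nonempty) : ∃ lb ∈ C, ∀ z ∈ c, lb ≤ z := by
  have : Nonempty c := hne.to_subtype
  have hdir : Directed (· ⊇ ·) fun z : c => Set.Iic z.1 := fun z₁ z₂ =>
    (hc.total z₁.2 z₂.2).elim (fun h => ⟨z₁, le_rfl, Set.Iic_subset_Iic.2 h⟩)
      fun h => ⟨z₂, Set.Iic_subset_Iic.2 h, le_rfl⟩
  obtain ⟨lb, hlbC, hlb⟩ : (C ∩ ⋂ z : c, Set.Iic z.1).Nonempty := by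
    by_contra hempty
    obtain ⟨z, hz⟩ := hC.elim_directed_family_closed _ (fun _ => isClosed_Iic)
      (Set.not_nonempty_iff_eq_empty.1 hempty) hdir
    exact Set.eq_empty_iff_forall_notMem.1 hz z ⟨hcC z.2, le_rfl⟩
  exact ⟨lb, hlbC, fun z hz => Set.mem_iInter.1 hlb ⟨z, hz⟩⟩

theorem IsCompact.exists_minimal (hC : IsCompact C) (hne : C.Nonempty) :
    ∃ m, Minimal (· ∈ C) m := by
  obtain ⟨x, hx⟩ := hne
  obtain ⟨m, -, hm⟩ := zorn_le_nonempty₀ (α := Xᵒᵈ) C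
    (fun c hcC hc y hy => hC.exists_lowerBound_of_isChain hcC hc.symm ⟨y, hy⟩) x hx
  exact ⟨m, hm⟩

end Topology

theorem MapClusterPt.exists_strictMono_forall_tendsto {ι Y : Type*} [TopologicalSpace Y]
    [FirstCountableTopology Y] {f : ℕ → ι → Y} {w : ι → Y} (h : MapClusterPt w atTop f)
    {T : Set ι} (hT : T.Countable) :
    ∃ ψ : ℕ → ℕ, StrictMono ψ ∧ ∀ t ∈ T, Tendsto (fun i => f (ψ i) t) atTop (𝓝 (w t)) := by
  have := hT.to_subtype
  let restrict : (ι → Y) → (T → Y) := fun g t => g t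
  have hrestrict : Continuous restrict := continuous_pi fun t => continuous_apply t.1
  obtain ⟨ψ, hψ, hlim⟩ := (h.continuousAt_comp hrestrict.continuousAt).tendsto_subseq
  exact ⟨ψ, hψ, fun t ht => tendsto_pi_nhds.1 hlim ⟨t, ht⟩⟩

lemma MapClusterPt.apply_le_of_forall_eventually_lt {α ι : Type*} {l : Filter α}
    {f : α → ι → ℝ} {w : ι → ℝ} (h : MapClusterPt w l f) {t : ι} {c : ℝ}
    (hf : ∀ b, c < b → ∀ᶠ i in l, f i t < b) : w t ≤ c :=
  le_of_forall_gt_imp_ge_of_dense fun b hb =>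
    (isClosed_le (continuous_apply t) continuous_const).mem_of_mapClusterPt h
      ((hf b hb).mono fun _ => le_of_lt)

theorem IsCompact.isSeqCompact_of_isIdealGauge {R : Type*} [Semiring R] [IsNoetherianRing R]
    {S : Set (R → ℝ)} (hS : IsCompact S) (hgauge : ∀ v ∈ S, IsIdealGauge v) :
    IsSeqCompact S := by
  intro x hxS
  have hC : IsCompact (S ∩ {w | MapClusterPt w atTop x}) :=
    hS.inter_right isClosed_setOfPred_clusterPt
  obtain ⟨m, hm⟩ := hC.exists_minimal
    (hS.exists_mapClusterPt (tendsto_principal.2 (Eventually.of_forall hxS)))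
  obtain ⟨hmS, hmx⟩ := hm.prop
  choose G hGsub hGspan using fun q : ℚ =>
    (Submodule.fg_span_iff_fg_span_finset_subset {P | m P < q}).1 (Ideal.fg_of_isNoetherianRing _)
  obtain ⟨ψ, hψ, hlim⟩ := hmx.exists_strictMono_forall_tendsto
    (Set.countable_iUnion fun q => (G q).countable_toSet)
  have hupper : ∀ P b, m P < b → ∀ᶠ i in atTop, x (ψ i) P < b := by
    intro P b hPb
    obtain ⟨q, hPq, hqb⟩ := exists_rat_btwn hPb
    have hgen : ∀ᶠ i in atTop, ∀ g ∈ G q, x (ψ i) g < q := (G q).eventually_all.2 fun g hg =>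
      (hlim g (Set.mem_iUnion.2 ⟨q, hg⟩)).eventually_lt_const (hGsub q hg)
    filter_upwards [hgen] with i hi
    have hPspan : P ∈ Ideal.span (G q : Set R) := (hGspan q).le (Submodule.subset_span hPq)
    exact ((hgauge _ (hxS _)).lt_of_mem_span ((hgauge m hmS).nonneg P |>.trans_lt hPq) hi
      hPspan).trans hqb
  refine ⟨m, hmS, ψ, hψ, hS.tendsto_nhds_of_unique_mapClusterPt
    (Eventually.of_forall fun i => hxS _) fun w hwS hw => ?_⟩
  exact hm.eq_of_le ⟨hwS, hw.of_comp hψ.tendsto_atTop⟩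
    fun P => hw.apply_le_of_forall_eventually_lt (hupper P)

namespace BerkovichBall

variable {k : Type*} [Field k] {n : ℕ} {φ : MvPolynomial (Fin (n + 1)) k → ℝ}

lemma le_one (hφ : φ ∈ BerkovichBall k n) (P : MvPolynomial (Fin (n + 1)) k) : φ P ≤ 1 := by
  obtain ⟨h0, -, hmul, hadd, hpos, hC, hX0, hXi⟩ := hφ
  induction P using MvPolynomial.induction_on with
  | C c =>
    rcases eq_or_ne c 0 with rfl | hc
    · simp [h0]
    · rw [hC c hc]
  | add P Q hP hQ => exact (hadd P Q).trans (max_le hP hQ)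
  | mul_X P i hP =>
    have hX : φ (MvPolynomial.X i) ≤ 1 := by
      rcases eq_or_ne i 0 with rfl | hi
      · rw [hX0, Real.exp_le_one_iff]
        norm_num
      · exact hXi i hi
    rw [hmul]
    exact mul_le_one₀ hP (hpos _) hX

lemma isIdealGauge (hφ : φ ∈ BerkovichBall k n) : IsIdealGauge φ where
  map_zero := hφ.1
  isNonarchimedean := hφ.2.2.2.1
  mul_le a P := by
    rw [hφ.2.2.1]
    exact mul_le_of_le_one_left (hφ.2.2.2.2.1 P) (le_one hφ a)

lemma isClosed : IsClosed (BerkovichBall k n) := by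
  simp only [BerkovichBall, Set.ofPred_and, Set.ofPred_forall]
  repeat' first
    | apply IsClosed.inter
    | refine isClosed_iInter fun _ => ?_
    | apply isClosed_eq
    | apply isClosed_le
  all_goals fun_prop

lemma isCompact : IsCompact (BerkovichBall k n) :=
  (isCompact_univ_pi fun _ => isCompact_Icc).of_isClosed_subset isClosed
    fun _ hφ P _ => ⟨hφ.2.2.2.2.1 P, le_one hφ P⟩

end BerkovichBall

theorem BerkovichBall.isSeqCompact_general (k : Type*) [Field k] (n : ℕ) :
    IsSeqCompact (BerkovichBall k n) :=
  BerkovichBall.isCompact.isSeqCompact_of_isIdealGauge fun _ => BerkovichBall.isIdealGauge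

/-- The Berkovich closed unit ball is sequentially compact: every sequence in it has a
subsequence converging pointwise to a point of it. -/
theorem BerkovichBall.isSeqCompact (k : Type*) [Field k] (n : ℕ) (hn : 1 ≤ n) :
    IsSeqCompact (BerkovichBall k n) :=
  BerkovichBall.isSeqCompact_general k n
end

section
/- Let t ∈ R be nonzero with t⁻¹ ∉ R, and let f ∈ R. For natural numbers p, p' and positive natural numbers q, q' with p'·q ≤ p·q', if f^q·t^{-p} ∈ R then f^{q'}·t^{-p'} ∈ R. (In other words, the set I(f) = {p/q ∈ ℚ_{≥0} : f^q·t^{-p} ∈ R} is a downward-closed segment of ℚ_{≥0} containing 0.) -/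
/-! In terms of the valuation `v` of `R`, the hypothesis reads `v f ^ q ≤ v t ^ p` and the claim
`v f ^ q' ≤ v t ^ p'`. Taking the `q'`-th power of the former gives `(v f ^ q') ^ q ≤ v t ^ (p * q')`,
which is at most `(v t ^ p') ^ q` because `v t ≤ 1`; then take `q`-th roots. -/

theorem pow_le_pow_of_pow_le_pow_of_le_one {Γ₀ : Type*} [LinearOrderedCommGroupWithZero Γ₀]
    {a b : Γ₀} (hb : b ≤ 1) {p p' q q' : ℕ} (hq : q ≠ 0) (hle : p' * q ≤ p * q')
    (h : a ^ q ≤ b ^ p) : a ^ q' ≤ b ^ p' := by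
  refine le_of_pow_le_pow_left₀ hq zero_le ?_
  calc (a ^ q') ^ q = (a ^ q) ^ q' := by rw [← pow_mul, ← pow_mul, mul_comm]
    _ ≤ (b ^ p) ^ q' := pow_le_pow_left' h q'
    _ = b ^ (p * q') := by rw [← pow_mul]
    _ ≤ b ^ (p' * q) := pow_le_pow_right_of_le_one' hb hle
    _ = (b ^ p') ^ q := by rw [← pow_mul]

theorem ValuationSubring.mul_inv_mem_iff_valuation_le {K : Type*} [Field K]
    (R : ValuationSubring K) (x : K) {y : K} (hy : y ≠ 0) :
    x * y⁻¹ ∈ R ↔ R.valuation x ≤ R.valuation y := by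
  rw [← R.valuation_le_one_iff, map_mul, map_inv₀,
    mul_inv_le_iff₀ (zero_lt_iff.mpr ((map_ne_zero _).mpr hy)), one_mul]

theorem ValuationSubring.segment_general (K : Type*) [Field K] (R : ValuationSubring K)
    (t : K) (ht : t ∈ R) (ht0 : t ≠ 0)
    (f : K)
    (p p' q q' : ℕ) (hq : 1 ≤ q) (hle : p' * q ≤ p * q')
    (h : f ^ q * t ^ (-(p : ℤ)) ∈ R) :
    f ^ q' * t ^ (-(p' : ℤ)) ∈ R := by
  rw [zpow_neg, zpow_natCast, R.mul_inv_mem_iff_valuation_le _ (pow_ne_zero _ ht0),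
    map_pow, map_pow] at h ⊢
  exact pow_le_pow_of_pow_le_pow_of_le_one ((R.valuation_le_one_iff t).mpr ht)
    (Nat.one_le_iff_ne_zero.mp hq) hle h

/-- Let `R` be a valuation subring of a field `K`, let `t ∈ R` be nonzero with
`t⁻¹ ∉ R`, and let `f ∈ R`. If `p'/q' ≤ p/q` (i.e. `p' * q ≤ p * q'`) and
`f ^ q * t ^ (-p) ∈ R`, then `f ^ q' * t ^ (-p') ∈ R`: the set
`I(f) = {p/q ∈ ℚ≥0 : f^q t^{-p} ∈ R}` is a downward-closed segment containing `0`. -/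
theorem ValuationSubring.segment (K : Type*) [Field K] (R : ValuationSubring K)
    (t : K) (ht : t ∈ R) (ht0 : t ≠ 0) (ht1 : t⁻¹ ∉ R)
    (f : K) (hf : f ∈ R)
    (p p' q q' : ℕ) (hq : 1 ≤ q) (hq' : 1 ≤ q') (hle : p' * q ≤ p * q')
    (h : f ^ q * t ^ (-(p : ℤ)) ∈ R) :
    f ^ q' * t ^ (-(p' : ℤ)) ∈ R :=
  ValuationSubring.segment_general K R t ht ht0 f p p' q q' hq hle h
end

section
/- Let t ∈ R be nonzero with t⁻¹ ∉ R. For g ∈ R define Φ(g) ∈ [0, ∞] (an element of the extended nonnegative reals) as the supremum of the set {p/q : p ∈ ℕ, q ∈ ℕ, q ≥ 1, g^q·t^{-p} ∈ R} (a nonempty subset of ℚ_{≥0}, since it contains 0). Then for all f, g ∈ R one has Φ(f·g) = Φ(f) + Φ(g) and Φ(f + g) ≥ min(Φ(f), Φ(g)), where addition and min are taken in [0, ∞]. -/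
/-!
With `v` the valuation of `R`, `g ^ q * t ^ (-p) ∈ R` means `v g ^ q ≤ v t ^ p`, so `Φ g` only
depends on `v g` and is antitone in it; the ultrametric inequality for `v` then gives the bound
for `f + g`. For products, bounds `v f ^ q ≤ v t ^ a` and `v g ^ q ≤ v t ^ b` multiply to
`v (f g) ^ q ≤ v t ^ (a + b)`. Conversely, in a linear order a bound `v (f g) ^ q ≤ v t ^ p`
splits into such bounds with `a + b ≥ p - 1`; the loss `1 / q` disappears on replacing `(p, q)`
by `(n p, n q)`.
-/

open scoped ENNReal

/-- For a valuation subring `R` of `K` and `t ∈ R` nonzero with `t⁻¹ ∉ R`, `Φ g` is the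
supremum in `[0, ∞]` of the rationals `p/q ≥ 0` with `g ^ q * t ^ (-p) ∈ R` (this set
contains `0` whenever `g ∈ R`). -/
noncomputable def Phi (K : Type*) [Field K] (R : ValuationSubring K) (t : K) (g : K) :
    ℝ≥0∞ :=
  sSup {x : ℝ≥0∞ | ∃ p q : ℕ, 1 ≤ q ∧ g ^ q * t ^ (-(p : ℤ)) ∈ R ∧
    x = (p : ℝ≥0∞) / (q : ℝ≥0∞)}

/-- For `τ < 1` in a value group of rank one, this is `log γ / log τ`. -/
noncomputable def logRatio {Γ : Type*} [LinearOrderedCommGroupWithZero Γ] (τ γ : Γ) : ℝ≥0∞ :=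
  sSup {x : ℝ≥0∞ | ∃ p q : ℕ, 1 ≤ q ∧ γ ^ q ≤ τ ^ p ∧ x = (p : ℝ≥0∞) / (q : ℝ≥0∞)}

theorem ENNReal.le_of_forall_le_add_inv_natCast {a b : ℝ≥0∞}
    (h : ∀ n : ℕ, 0 < n → a ≤ b + (n : ℝ≥0∞)⁻¹) : a ≤ b := by
  refine ENNReal.le_of_forall_pos_le_add fun ε hε _ => ?_
  obtain ⟨n, hn⟩ := ENNReal.exists_inv_nat_lt (ENNReal.coe_ne_zero.mpr hε.ne')
  have hn0 : 0 < n := Nat.pos_of_ne_zero fun h0 => by simp [h0] at hn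
  exact (h n hn0).trans (add_le_add_right hn.le _)

theorem ENNReal.natCast_mul_div_natCast_mul {p q n : ℕ} (hn : n ≠ 0) :
    ((p * n : ℕ) : ℝ≥0∞) / ((q * n : ℕ) : ℝ≥0∞) = (p : ℝ≥0∞) / (q : ℝ≥0∞) := by
  push_cast
  exact ENNReal.mul_div_mul_right _ _ (Nat.cast_ne_zero.mpr hn) (ENNReal.natCast_ne_top n)

section LinearOrderedCommGroupWithZero

variable {Γ : Type*} [LinearOrderedCommGroupWithZero Γ]

theorem exists_le_pow_le_pow_of_mul_le_pow {τ x y : Γ} {p : ℕ} (hx : x ≤ 1) (hy : y ≤ 1)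
    (h : x * y ≤ τ ^ p) : ∃ a b : ℕ, p ≤ a + b + 1 ∧ x ≤ τ ^ a ∧ y ≤ τ ^ b := by
  classical
  set a := Nat.findGreatest (fun a : ℕ => x ≤ τ ^ a) p
  have hxa : x ≤ τ ^ a :=
    Nat.findGreatest_spec (P := fun a => x ≤ τ ^ a) (Nat.zero_le p) (by simpa using hx)
  rcases (Nat.findGreatest_le (P := fun a : ℕ => x ≤ τ ^ a) p).eq_or_lt with hap | hap
  · exact ⟨a, 0, by omega, hxa, by simpa using hy⟩
  · refine ⟨a, p - (a + 1), by omega, hxa, ?_⟩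
    have hlt : τ ^ (a + 1) < x := not_le.mp (Nat.findGreatest_is_greatest (Nat.lt_succ_self a) hap)
    by_contra! hyb
    have hprod := Left.mul_lt_mul_of_nonneg hlt hyb zero_le zero_le
    rw [← pow_add, Nat.add_sub_cancel' hap] at hprod
    exact hprod.not_ge h

variable {τ γ δ : Γ}

theorem div_le_logRatio {p q : ℕ} (hq : 1 ≤ q) (h : γ ^ q ≤ τ ^ p) :
    (p : ℝ≥0∞) / (q : ℝ≥0∞) ≤ logRatio τ γ :=
  le_sSup ⟨p, q, hq, h, rfl⟩

theorem logRatio_le {c : ℝ≥0∞}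
    (h : ∀ p q : ℕ, 1 ≤ q → γ ^ q ≤ τ ^ p → (p : ℝ≥0∞) / (q : ℝ≥0∞) ≤ c) : logRatio τ γ ≤ c :=
  sSup_le fun _ ⟨p, q, hq, hpq, hx⟩ => hx ▸ h p q hq hpq

theorem logRatio_anti (τ : Γ) : Antitone (logRatio τ) := fun _ _ hγδ =>
  logRatio_le fun _ _ hq h => div_le_logRatio hq ((pow_le_pow_left' hγδ _).trans h)

theorem logRatio_mul_le (hγ : γ ≤ 1) (hδ : δ ≤ 1) :
    logRatio τ (γ * δ) ≤ logRatio τ γ + logRatio τ δ := by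
  refine logRatio_le fun p q hq h => ENNReal.le_of_forall_le_add_inv_natCast fun n hn => ?_
  have hqn : 1 ≤ q * n := Nat.one_le_iff_ne_zero.mpr (by positivity)
  have hpow : γ ^ (q * n) * δ ^ (q * n) ≤ τ ^ (p * n) := by
    rw [← mul_pow, pow_mul, pow_mul]
    exact pow_le_pow_left' h n
  obtain ⟨a, b, hab, ha, hb⟩ :=
    exists_le_pow_le_pow_of_mul_le_pow (pow_le_one' hγ _) (pow_le_one' hδ _) hpow
  have hinv : 1 / ((q * n : ℕ) : ℝ≥0∞) ≤ (n : ℝ≥0∞)⁻¹ := by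
    rw [one_div, ENNReal.inv_le_inv]
    exact_mod_cast Nat.le_mul_of_pos_left n hq
  calc (p : ℝ≥0∞) / q = ((p * n : ℕ) : ℝ≥0∞) / ((q * n : ℕ) : ℝ≥0∞) :=
        (ENNReal.natCast_mul_div_natCast_mul hn.ne').symm
    _ ≤ ((a : ℝ≥0∞) + b + 1) / ((q * n : ℕ) : ℝ≥0∞) := by gcongr; exact_mod_cast hab
    _ = (a : ℝ≥0∞) / ((q * n : ℕ) : ℝ≥0∞) + (b : ℝ≥0∞) / ((q * n : ℕ) : ℝ≥0∞)
          + 1 / ((q * n : ℕ) : ℝ≥0∞) := by rw [ENNReal.add_div, ENNReal.add_div]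
    _ ≤ logRatio τ γ + logRatio τ δ + (n : ℝ≥0∞)⁻¹ := by
      gcongr
      exacts [div_le_logRatio hqn ha, div_le_logRatio hqn hb]

theorem add_le_logRatio_mul (hγ : γ ≤ 1) (hδ : δ ≤ 1) :
    logRatio τ γ + logRatio τ δ ≤ logRatio τ (γ * δ) := by
  rw [logRatio, logRatio, sSup_eq_iSup, sSup_eq_iSup]
  refine ENNReal.biSup_add_biSup_le ?_ ?_ ?_
  · exact ⟨0, 0, 1, le_rfl, by simpa using hγ, by simp⟩
  · exact ⟨0, 0, 1, le_rfl, by simpa using hδ, by simp⟩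
  rintro _ ⟨p₁, q₁, hq₁, h₁, rfl⟩ _ ⟨p₂, q₂, hq₂, h₂, rfl⟩
  have hpow : (γ * δ) ^ (q₁ * q₂) ≤ τ ^ (p₁ * q₂ + p₂ * q₁) :=
    calc (γ * δ) ^ (q₁ * q₂) = (γ ^ q₁) ^ q₂ * (δ ^ q₂) ^ q₁ := by
          rw [mul_pow, pow_mul, mul_comm q₁ q₂, pow_mul]
      _ ≤ (τ ^ p₁) ^ q₂ * (τ ^ p₂) ^ q₁ :=
          mul_le_mul' (pow_le_pow_left' h₁ q₂) (pow_le_pow_left' h₂ q₁)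
      _ = τ ^ (p₁ * q₂ + p₂ * q₁) := by rw [pow_add, pow_mul, pow_mul]
  calc (p₁ : ℝ≥0∞) / q₁ + (p₂ : ℝ≥0∞) / q₂
      = ((p₁ * q₂ : ℕ) : ℝ≥0∞) / ((q₁ * q₂ : ℕ) : ℝ≥0∞)
        + ((p₂ * q₁ : ℕ) : ℝ≥0∞) / ((q₁ * q₂ : ℕ) : ℝ≥0∞) := by
        rw [ENNReal.natCast_mul_div_natCast_mul (by omega), mul_comm q₁,
          ENNReal.natCast_mul_div_natCast_mul (by omega)]
    _ = ((p₁ * q₂ + p₂ * q₁ : ℕ) : ℝ≥0∞) / ((q₁ * q₂ : ℕ) : ℝ≥0∞) := by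
      rw [Nat.cast_add, ENNReal.add_div]
    _ ≤ logRatio τ (γ * δ) := div_le_logRatio (Nat.mul_le_mul hq₁ hq₂) hpow

theorem logRatio_mul (hγ : γ ≤ 1) (hδ : δ ≤ 1) :
    logRatio τ (γ * δ) = logRatio τ γ + logRatio τ δ :=
  (logRatio_mul_le hγ hδ).antisymm (add_le_logRatio_mul hγ hδ)

end LinearOrderedCommGroupWithZero

theorem ValuationSubring.pow_mul_zpow_neg_mem_iff {K : Type*} [Field K] (R : ValuationSubring K)
    {t : K} (ht : t ≠ 0) (g : K) (p q : ℕ) :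
    g ^ q * t ^ (-(p : ℤ)) ∈ R ↔ R.valuation g ^ q ≤ R.valuation t ^ p := by
  have hvt : 0 < R.valuation t ^ p := pow_pos (zero_lt_iff.mpr (R.valuation.ne_zero_iff.mpr ht)) p
  rw [← R.valuation_le_one_iff, map_mul, map_pow, map_zpow₀, zpow_neg, zpow_natCast,
    mul_inv_le_iff₀ hvt, one_mul]

theorem Phi.eq_logRatio {K : Type*} [Field K] {R : ValuationSubring K} {t : K} (ht : t ≠ 0)
    (g : K) : Phi K R t g = logRatio (R.valuation t) (R.valuation g) := by
  simp only [Phi, logRatio, R.pow_mul_zpow_neg_mem_iff ht]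

theorem Phi.add_min_general (K : Type*) [Field K] (R : ValuationSubring K)
    (t : K) (ht0 : t ≠ 0)
    (f g : K) (hf : f ∈ R) (hg : g ∈ R) :
    Phi K R t (f * g) = Phi K R t f + Phi K R t g ∧
      min (Phi K R t f) (Phi K R t g) ≤ Phi K R t (f + g) := by
  have hvf : R.valuation f ≤ 1 := (R.valuation_le_one_iff f).mpr hf
  have hvg : R.valuation g ≤ 1 := (R.valuation_le_one_iff g).mpr hg
  simp only [Phi.eq_logRatio ht0, map_mul]
  refine ⟨logRatio_mul hvf hvg, ?_⟩
  rcases le_max_iff.mp (R.valuation.map_add f g) with h | h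
  · exact (min_le_left _ _).trans (logRatio_anti _ h)
  · exact (min_le_right _ _).trans (logRatio_anti _ h)

/-- `Φ` is additive on products and satisfies the ultrametric-type inequality
`Φ (f + g) ≥ min (Φ f) (Φ g)`, with values in `[0, ∞]`. -/
theorem Phi.add_min (K : Type*) [Field K] (R : ValuationSubring K)
    (t : K) (ht : t ∈ R) (ht0 : t ≠ 0) (ht1 : t⁻¹ ∉ R)
    (f g : K) (hf : f ∈ R) (hg : g ∈ R) :
    Phi K R t (f * g) = Phi K R t f + Phi K R t g ∧
      min (Phi K R t f) (Phi K R t g) ≤ Phi K R t (f + g) :=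
  Phi.add_min_general K R t ht0 f g hf hg
end
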